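/- Let A ∈ ℝ^{m×m} and suppose ker(A) is spanned by l linearly independent vectors χ^1,…,χ^l ∈ ℝ^m with χ^λ_μ = K_μ > 0 for μ ∈ L_λ and χ^λ_μ = 0 for μ ∉ L_λ, where L_1,…,L_l partition {1,…,m} with enumerations i^λ_1,…,i^λ_{m_λ}, and let ℰ be the set of m−l consecutive pairs (i^λ_μ, i^λ_{μ+1}). Let Ỹ ∈ ℝ^{n×m}, let I_ℰ ∈ ℝ^{m×(m−l)} have column e^j − e^i for (i,j) ∈ ℰ, set M = Ỹ I_ℰ, and define κ ∈ ℝ^{m−l}_> by κ_{(i,j)} = K_j / K_i for (i,j) ∈ ℰ. Suppose ker(M) ≠ {0} and let C ∈ ℝ^{(m−l)×p} satisfy im(C) = ker(M) and ker(C) = {0}. Then {x ∈ ℝ^n_> : A x^{Ỹ} = 0} is nonempty if and only if κ^C = (1,…,1) ∈ ℝ^p. -/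

import Mathlib

/-- For `x ∈ ℝ^ι` and `M ∈ ℝ^{ι×κ}`, the generalized monomial vector `x^M ∈ ℝ^κ`
with `(x^M)_j = ∏ i, x i ^ M i j` (real exponentiation). -/
noncomputable def matPow {ι κ : Type*} [Fintype ι] (x : ι → ℝ) (M : Matrix ι κ ℝ) : κ → ℝ :=
  fun j => ∏ i, x i ^ M i j

/-- The source vertex `i^λ_μ` of the consecutive pair `(i^λ_μ, i^λ_{μ+1})` in `ℰ`,
for an enumeration `φ` of `{1,…,m}` by classes `L_λ`. -/
def src {m l : ℕ} {mlam : Fin l → ℕ} (φ : ((lam : Fin l) × Fin (mlam lam)) ≃ Fin m)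
    (s : (lam : Fin l) × Fin (mlam lam - 1)) : Fin m :=
  φ ⟨s.1, ⟨s.2.1, by have := s.2.2; omega⟩⟩

/-- The target vertex `i^λ_{μ+1}` of the consecutive pair `(i^λ_μ, i^λ_{μ+1})` in `ℰ`. -/
def tgt {m l : ℕ} {mlam : Fin l → ℕ} (φ : ((lam : Fin l) × Fin (mlam lam)) ≃ Fin m)
    (s : (lam : Fin l) × Fin (mlam lam - 1)) : Fin m :=
  φ ⟨s.1, ⟨s.2.1 + 1, by have := s.2.2; omega⟩⟩

/-- The vector `χ^λ ∈ ℝ^m` with `χ^λ_μ = K_μ` for `μ ∈ L_λ` and `χ^λ_μ = 0` otherwise. -/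
def chi {m l : ℕ} {mlam : Fin l → ℕ} (φ : ((lam : Fin l) × Fin (mlam lam)) ≃ Fin m)
    (K : Fin m → ℝ) : Fin l → Fin m → ℝ :=
  fun lam μ => if (φ.symm μ).1 = lam then K μ else 0

/-- The matrix `I_ℰ` whose column for `(i,j) ∈ ℰ` is `e^j - e^i`. -/
def Imat {m l : ℕ} {mlam : Fin l → ℕ} (φ : ((lam : Fin l) × Fin (mlam lam)) ≃ Fin m) :
    Matrix (Fin m) ((lam : Fin l) × Fin (mlam lam - 1)) ℝ :=
  Matrix.of fun i s =>
    (if i = tgt φ s then 1 else 0) - (if i = src φ s then 1 else 0)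

open Matrix

lemma exists_transpose_mulVec {α β : Type*} [Fintype α] [Fintype β] [DecidableEq β]
    (B : Matrix α β ℝ) (z : β → ℝ)
    (h : ∀ v : β → ℝ, B.mulVec v = 0 → z ⬝ᵥ v = 0) :
    ∃ y : α → ℝ, Bᵀ.mulVec y = z := by
  classical
  set L : α → (β → ℝ) →ₗ[ℝ] ℝ := fun a => (LinearMap.proj a).comp B.mulVecLin with hL
  set Kf : (β → ℝ) →ₗ[ℝ] ℝ := ∑ b, z b • LinearMap.proj b with hKf
  have hKfapp : ∀ v, Kf v = z ⬝ᵥ v := by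
    intro v
    simp [hKf, dotProduct]
  have hsub : ⨅ a, LinearMap.ker (L a) ≤ LinearMap.ker Kf := by
    intro v hv
    simp only [Submodule.mem_iInf, LinearMap.mem_ker, hL, LinearMap.coe_comp,
      Function.comp_apply, Matrix.mulVecLin_apply, LinearMap.proj_apply] at hv
    have hv0 : B.mulVec v = 0 := funext fun a => hv a
    simp [LinearMap.mem_ker, hKfapp, h v hv0]
  obtain ⟨c, hc⟩ := (Submodule.mem_span_range_iff_exists_fun ℝ).1
    (mem_span_of_iInf_ker_le_ker hsub)
  refine ⟨c, funext fun b => ?_⟩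
  have := LinearMap.congr_fun hc (Pi.single b 1)
  simp only [LinearMap.coe_sum, Finset.sum_apply, LinearMap.smul_apply, smul_eq_mul,
    hL, LinearMap.coe_comp, Function.comp_apply, Matrix.mulVecLin_apply,
    LinearMap.proj_apply, Matrix.mulVec_single, mul_one, hKfapp, MulOpposite.op_one, one_smul,
    Matrix.col_apply] at this
  rw [Matrix.mulVec, dotProduct]
  simp only [Matrix.transpose_apply]
  rw [show ∑ a, B a b * c a = ∑ a, c a * B a b from Finset.sum_congr rfl fun a _ => mul_comm _ _]
  rw [this]
  simp [dotProduct, Pi.single_apply, mul_ite]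

lemma matPow_eq_exp {ι κ : Type*} [Fintype ι] (x : ι → ℝ) (hx : ∀ i, 0 < x i)
    (M : Matrix ι κ ℝ) (j : κ) :
    matPow x M j = Real.exp (∑ i, M i j * Real.log (x i)) := by
  rw [matPow, Real.exp_sum]
  exact Finset.prod_congr rfl fun i _ => by
    rw [Real.rpow_def_of_pos (hx i), mul_comm]

lemma vecMul_Imat {m l : ℕ} {mlam : Fin l → ℕ}
    (φ : ((lam : Fin l) × Fin (mlam lam)) ≃ Fin m)
    (u : Fin m → ℝ) (s : (lam : Fin l) × Fin (mlam lam - 1)) :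
    (u ᵥ* Imat φ) s = u (tgt φ s) - u (src φ s) := by
  simp [Matrix.vecMul, dotProduct, Imat, mul_sub, Finset.sum_sub_distrib,
    mul_ite, mul_one, mul_zero]

/-- under the kernel-structure assumption on `A`, with `M = Ỹ I_ℰ`,
`κ_{(i,j)} = K_j / K_i`, `ker M ≠ {0}`, and `C` with `im C = ker M`, `ker C = {0}`:
`A x^Ỹ = 0` has a positive solution iff `κ^C = (1,…,1)`. -/
theorem stmt11 {m l n p : ℕ} {A : Matrix (Fin m) (Fin m) ℝ}
    {mlam : Fin l → ℕ} (hml : ∀ lam, 0 < mlam lam)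
    (φ : ((lam : Fin l) × Fin (mlam lam)) ≃ Fin m)
    (K : Fin m → ℝ) (hK : ∀ μ, 0 < K μ)
    (hind : LinearIndependent ℝ (chi φ K))
    (hker : LinearMap.ker A.mulVecLin = Submodule.span ℝ (Set.range (chi φ K)))
    (Yt : Matrix (Fin n) (Fin m) ℝ)
    (hM : LinearMap.ker (Yt * Imat φ).mulVecLin ≠ ⊥)
    (C : Matrix ((lam : Fin l) × Fin (mlam lam - 1)) (Fin p) ℝ)
    (hC1 : LinearMap.range C.mulVecLin = LinearMap.ker (Yt * Imat φ).mulVecLin)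
    (hC2 : LinearMap.ker C.mulVecLin = ⊥) :
    (∃ x : Fin n → ℝ, (∀ i, 0 < x i) ∧ A.mulVec (matPow x Yt) = 0) ↔
      matPow (fun s => K (tgt φ s) / K (src φ s)) C = fun _ => (1 : ℝ) := by
  classical
  have hKne : ∀ μ, K μ ≠ 0 := fun μ => (hK μ).ne'
  set lκ : (lam : Fin l) × Fin (mlam lam - 1) → ℝ :=
    fun s => Real.log (K (tgt φ s)) - Real.log (K (src φ s)) with hlκ
  have hκpos : ∀ s, 0 < K (tgt φ s) / K (src φ s) := fun s => div_pos (hK _) (hK _)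
  have hlog : ∀ s, Real.log (K (tgt φ s) / K (src φ s)) = lκ s :=
    fun s => Real.log_div (hKne _) (hKne _)
  have hRHS : (matPow (fun s => K (tgt φ s) / K (src φ s)) C = fun _ => (1 : ℝ)) ↔
      ∀ j, ∑ s, C s j * lκ s = 0 := by
    rw [funext_iff]
    refine forall_congr' fun j => ?_
    rw [matPow_eq_exp _ hκpos, Real.exp_eq_one_iff]
    simp only [hlog]
  rw [hRHS]
  constructor
  · rintro ⟨x, hx, hAx⟩ j
    have hmem : matPow x Yt ∈ LinearMap.ker A.mulVecLin := by
      rw [LinearMap.mem_ker, Matrix.mulVecLin_apply, hAx]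
    rw [hker] at hmem
    obtain ⟨c, hc⟩ := (Submodule.mem_span_range_iff_exists_fun ℝ).1 hmem
    have hrep : ∀ μ, matPow x Yt μ = c (φ.symm μ).1 * K μ := by
      intro μ
      have h := congrFun hc μ
      simp only [Finset.sum_apply, Pi.smul_apply, smul_eq_mul, chi, mul_ite, mul_zero,
        Finset.sum_ite_eq, Finset.mem_univ, if_true] at h
      exact h.symm
    have hmp : ∀ μ, 0 < matPow x Yt μ :=
      fun μ => Finset.prod_pos fun i _ => Real.rpow_pos_of_pos (hx i) _
    have hcpos : ∀ lam, 0 < c lam := by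
      intro lam
      have h := hmp (φ ⟨lam, ⟨0, hml lam⟩⟩)
      rw [hrep, Equiv.symm_apply_apply] at h
      rcases mul_pos_iff.mp h with ⟨h1, _⟩ | ⟨_, h2⟩
      · exact h1
      · exact absurd (hK _) (not_lt.2 h2.le)
    set w : Fin m → ℝ := (fun i => Real.log (x i)) ᵥ* Yt with hw
    have hwval : ∀ μ, w μ = Real.log (matPow x Yt μ) := by
      intro μ
      rw [matPow_eq_exp x hx, Real.log_exp]
      simp only [hw, Matrix.vecMul, dotProduct]
      exact Finset.sum_congr rfl fun i _ => mul_comm _ _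
    have hedge : ∀ s, w (tgt φ s) - w (src φ s) = lκ s := by
      intro s
      rw [hwval, hwval, hrep, hrep]
      have h1 : (φ.symm (tgt φ s)).1 = s.1 := by rw [tgt, Equiv.symm_apply_apply]
      have h2 : (φ.symm (src φ s)).1 = s.1 := by rw [src, Equiv.symm_apply_apply]
      rw [h1, h2, Real.log_mul (hcpos s.1).ne' (hKne _),
        Real.log_mul (hcpos s.1).ne' (hKne _), hlκ]
      ring
    have hcol : (Yt * Imat φ).mulVec (fun s => C s j) = 0 := by
      have hm : (fun s => C s j) ∈ LinearMap.range C.mulVecLin :=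
        ⟨Pi.single j 1, by funext s; simp [Matrix.mulVecLin_apply, Matrix.mulVec_single]⟩
      rw [hC1, LinearMap.mem_ker, Matrix.mulVecLin_apply] at hm
      exact hm
    calc ∑ s, C s j * lκ s
        = (w ᵥ* Imat φ) ⬝ᵥ (fun s => C s j) := by
          simp only [dotProduct, vecMul_Imat, hedge]
          exact Finset.sum_congr rfl fun s _ => mul_comm _ _
      _ = ((fun i => Real.log (x i)) ᵥ* (Yt * Imat φ)) ⬝ᵥ (fun s => C s j) := by
          rw [hw, Matrix.vecMul_vecMul]
      _ = (fun i => Real.log (x i)) ⬝ᵥ ((Yt * Imat φ).mulVec (fun s => C s j)) :=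
          (Matrix.dotProduct_mulVec _ _ _).symm
      _ = 0 := by rw [hcol]; simp
  · intro hj
    have hperp : ∀ v, (Yt * Imat φ).mulVec v = 0 → lκ ⬝ᵥ v = 0 := by
      intro v hv
      have hvmem : v ∈ LinearMap.range C.mulVecLin := by
        rw [hC1]
        exact LinearMap.mem_ker.2 (by rw [Matrix.mulVecLin_apply]; exact hv)
      obtain ⟨u, hu⟩ := hvmem
      rw [← hu, Matrix.mulVecLin_apply, Matrix.dotProduct_mulVec]
      have hz : lκ ᵥ* C = 0 := by
        funext j
        simp only [Matrix.vecMul, dotProduct, Pi.zero_apply]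
        rw [show ∑ s, lκ s * C s j = ∑ s, C s j * lκ s from
          Finset.sum_congr rfl fun s _ => mul_comm _ _]
        exact hj j
      rw [hz]
      simp
    obtain ⟨y, hy⟩ := exists_transpose_mulVec (Yt * Imat φ) lκ hperp
    set w : Fin m → ℝ := y ᵥ* Yt with hw
    have hyw : ∀ s, w (tgt φ s) - w (src φ s) = lκ s := by
      intro s
      have h := congrFun hy s
      rw [Matrix.mulVec_transpose, ← Matrix.vecMul_vecMul] at h
      rw [← vecMul_Imat φ w s, hw]
      exact h
    set u : Fin m → ℝ := fun μ => w μ - Real.log (K μ) with hu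
    have huedge : ∀ s, u (tgt φ s) = u (src φ s) := by
      intro s
      have h := hyw s
      simp only [hlκ] at h
      simp only [hu]
      linarith
    have hchain : ∀ (lam : Fin l) (k : ℕ) (hk : k < mlam lam),
        u (φ ⟨lam, ⟨k, hk⟩⟩) = u (φ ⟨lam, ⟨0, hml lam⟩⟩) := by
      intro lam k
      induction k with
      | zero => intro hk; rfl
      | succ k ih =>
        intro hk
        have hk1 : k < mlam lam - 1 := by omega
        have he := huedge ⟨lam, ⟨k, hk1⟩⟩
        exact he.trans (ih (by omega))
    set c : Fin l → ℝ := fun lam => Real.exp (u (φ ⟨lam, ⟨0, hml lam⟩⟩)) with hcdef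
    refine ⟨fun i => Real.exp (y i), fun i => Real.exp_pos _, ?_⟩
    have hx : ∀ i, 0 < Real.exp (y i) := fun i => Real.exp_pos _
    have hrep : matPow (fun i => Real.exp (y i)) Yt = ∑ lam, c lam • chi φ K lam := by
      funext μ
      rw [matPow_eq_exp _ hx]
      have h1 : ∑ i, Yt i μ * Real.log (Real.exp (y i)) = w μ := by
        simp only [Real.log_exp, hw, Matrix.vecMul, dotProduct]
        exact Finset.sum_congr rfl fun i _ => mul_comm _ _
      rw [h1]
      have h2 := hchain (φ.symm μ).1 (φ.symm μ).2.1 (φ.symm μ).2.2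
      have h2' : u μ = u (φ ⟨(φ.symm μ).1, ⟨0, hml _⟩⟩) := by
        rw [← h2]
        congr 1
        rw [show (⟨(φ.symm μ).1, ⟨(φ.symm μ).2.1, (φ.symm μ).2.2⟩⟩ :
          (lam : Fin l) × Fin (mlam lam)) = φ.symm μ from rfl, Equiv.apply_symm_apply]
      have h3 : w μ = u (φ ⟨(φ.symm μ).1, ⟨0, hml _⟩⟩) + Real.log (K μ) := by
        rw [← h2']
        simp [hu]
      rw [h3, Real.exp_add, Real.exp_log (hK μ)]
      simp only [Finset.sum_apply, Pi.smul_apply, smul_eq_mul, chi, mul_ite, mul_zero,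
        Finset.sum_ite_eq, Finset.mem_univ, if_true, hcdef]
    have hmem : matPow (fun i => Real.exp (y i)) Yt ∈ LinearMap.ker A.mulVecLin := by
      rw [hker]
      exact (Submodule.mem_span_range_iff_exists_fun ℝ).2 ⟨c, hrep.symm⟩
    have := LinearMap.mem_ker.1 hmem
    rwa [Matrix.mulVecLin_apply] at this
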